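/- arXiv:1207.4531 — 8 statements merged into one kernel-verified Lean document; each statement's English description precedes it below -/
import Mathlib

section
/- Let D be a set and T : D → D a mapping with no fixed point. Then D can be partitioned into three disjoint subsets A₀, A₁, A₂ such that Aᵢ ∩ T(Aᵢ) = ∅ for i = 0, 1, 2. -/
/-!
Color `x` and `T x` differently, i.e. properly 3-color the graph with edges `x ~ T x`. A finite
set `s` spans at most `#s` such edges, so some vertex of `s` has at most two neighbours in `s`;
removing it and coloring the rest inductively leaves a free color for it. The finite colorings
glue to a global one by compactness of `D → Fin 3` (de Bruijn–Erdős), and the color classes are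
the required sets.
-/

open Finset

section

variable {D α : Type*} (T : D → D)

lemma Finset.exists_mem_card_filter_apply_eq_le_one [DecidableEq D] {s : Finset D}
    (hs : s.Nonempty) : ∃ v ∈ s, #{u ∈ s | T u = v} ≤ 1 :=
  exists_card_fiber_le_of_card_le_mul hs (by rw [mul_one])

lemma Finset.exists_coloring_ne_apply [Fintype α] (hα : 2 < Fintype.card α)
    (hT : ∀ x, T x ≠ x) (s : Finset D) :
    ∃ c : D → α, ∀ x ∈ s, T x ∈ s → c x ≠ c (T x) := by
  classical
  induction s using Finset.strongInduction with
  | H s ih =>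
  rcases s.eq_empty_or_nonempty with rfl | hs
  · have : Nonempty α := Fintype.card_pos_iff.mp (by omega)
    exact ⟨fun _ => Classical.arbitrary α, by simp⟩
  obtain ⟨v, hv, hfiber⟩ := s.exists_mem_card_filter_apply_eq_le_one T hs
  obtain ⟨c, hc⟩ := ih (s.erase v) (erase_ssubset hv)
  set forbidden := insert (c (T v)) ({u ∈ s | T u = v}.image c)
  have hforbidden : #forbidden < #(univ : Finset α) := by
    calc #forbidden ≤ #({u ∈ s | T u = v}.image c) + 1 := card_insert_le _ _
      _ ≤ #{u ∈ s | T u = v} + 1 := by gcongr; exact card_image_le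
      _ < #(univ : Finset α) := by rw [card_univ]; omega
  obtain ⟨a, -, ha⟩ := exists_mem_notMem_of_card_lt_card hforbidden
  refine ⟨Function.update c v a, fun x hx hTx => ?_⟩
  by_cases hxv : x = v
  · subst hxv
    rw [Function.update_self, Function.update_of_ne (hT x)]
    exact fun h => ha (h ▸ mem_insert_self _ _)
  by_cases hTxv : T x = v
  · rw [hTxv, Function.update_self, Function.update_of_ne hxv]
    exact fun h => ha (h ▸ mem_insert_of_mem (mem_image_of_mem c (mem_filter.mpr ⟨hx, hTxv⟩)))
  rw [Function.update_of_ne hxv, Function.update_of_ne hTxv]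
  exact hc x (mem_erase.mpr ⟨hxv, hx⟩) (mem_erase.mpr ⟨hTxv, hTx⟩)

lemma exists_forall_ne_apply_of_forall_finset [TopologicalSpace α] [DiscreteTopology α]
    [Finite α] (h : ∀ s : Finset D, ∃ c : D → α, ∀ x ∈ s, c x ≠ c (T x)) :
    ∃ c : D → α, ∀ x, c x ≠ c (T x) := by
  have hclosed : ∀ x, IsClosed {c : D → α | c x ≠ c (T x)} := fun x =>
    (isClosed_discrete {p : α × α | p.1 ≠ p.2}).preimage
      (f := fun c : D → α => (c x, c (T x))) (by fun_prop)
  obtain ⟨c, hc⟩ := CompactSpace.iInter_nonempty hclosed fun s => by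
    simpa only [Set.nonempty_def, Set.mem_iInter, Set.mem_ofPred_eq] using h s
  exact ⟨c, Set.mem_iInter.mp hc⟩

end

/-- Katetov: if `T : D → D` has no fixed point, `D` partitions into three sets
each disjoint from its image under `T`. -/
theorem katetov_three_sets {D : Type*} (T : D → D) (hT : ∀ x, T x ≠ x) :
    ∃ A : Fin 3 → Set D,
      (⋃ i, A i) = Set.univ ∧
      (Pairwise fun i j => Disjoint (A i) (A j)) ∧
      ∀ i, A i ∩ (T '' A i) = ∅ := by
  classical
  obtain ⟨c, hc⟩ := exists_forall_ne_apply_of_forall_finset T fun s => by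
    obtain ⟨c, hc⟩ := (s ∪ s.image T).exists_coloring_ne_apply (α := Fin 3) T (by simp) hT
    exact ⟨c, fun x hx => hc x (mem_union_left _ hx) (mem_union_right _ (mem_image_of_mem T hx))⟩
  refine ⟨fun i => c ⁻¹' {i}, ?_, fun i j hij => ?_, fun i => ?_⟩
  · exact Set.iUnion_eq_univ_iff.mpr fun x => ⟨c x, rfl⟩
  · exact (Set.disjoint_singleton.mpr hij).preimage c
  · rw [Set.eq_empty_iff_forall_notMem]
    rintro _ ⟨hx, y, hy, rfl⟩
    exact hc y (hy.trans hx.symm)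
end

section
/- Every L-embedded subset of a Banach space is weakly closed. -/
open NormedSpace Set

/-- The weak* closure in the bidual of a set of functionals on the dual. -/
noncomputable def weakStarClosure {E : Type*} [NormedAddCommGroup E] [NormedSpace ℝ E]
    (S : Set (StrongDual ℝ (StrongDual ℝ E))) : Set (StrongDual ℝ (StrongDual ℝ E)) :=
  {u | StrongDual.toWeakDual u ∈ closure (StrongDual.toWeakDual '' S)}

/-- A nonempty subset `C` of a Banach space `E` is L-embedded if there is a subspace
`E_s` of the bidual with `E + E_s = E ⊕₁ E_s` and the weak* closure of `C` contained in
`C ⊕₁ E_s` (with additive norms). -/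
def IsLEmbeddedSet {E : Type*} [NormedAddCommGroup E] [NormedSpace ℝ E] (C : Set E) : Prop :=
  ∃ Es : Submodule ℝ (StrongDual ℝ (StrongDual ℝ E)),
    (∀ (x : E), ∀ ξ ∈ Es, ‖inclusionInDoubleDual ℝ E x + ξ‖ = ‖x‖ + ‖ξ‖) ∧
    ∀ u ∈ weakStarClosure (inclusionInDoubleDual ℝ E '' C),
      ∃ c ∈ C, ∃ ξ ∈ Es, u = inclusionInDoubleDual ℝ E c + ξ ∧ ‖u‖ = ‖c‖ + ‖ξ‖

/-!
If `x` lies in the weak closure of `C`, then `x` lies in the weak* closure of `C` in the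
bidual, so `x = c + ξ` with `c ∈ C` and `ξ ∈ E_s`. The `ℓ₁`-sum condition applied to
`(c - x) + ξ = 0` gives `‖c - x‖ + ‖ξ‖ = 0`, hence `x = c ∈ C`.
-/

lemma eq_of_inclusionInDoubleDual_eq_add {𝕜 E : Type*} [NontriviallyNormedField 𝕜]
    [NormedAddCommGroup E] [NormedSpace 𝕜 E] {S : Set (StrongDual 𝕜 (StrongDual 𝕜 E))}
    (hS : ∀ (x : E), ∀ ξ ∈ S, ‖inclusionInDoubleDual 𝕜 E x + ξ‖ = ‖x‖ + ‖ξ‖)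
    {x c : E} {ξ : StrongDual 𝕜 (StrongDual 𝕜 E)} (hξ : ξ ∈ S)
    (h : inclusionInDoubleDual 𝕜 E x = inclusionInDoubleDual 𝕜 E c + ξ) : x = c := by
  have hzero : inclusionInDoubleDual 𝕜 E (c - x) + ξ = 0 := by
    rw [map_sub, h]
    abel
  have hnorm := hS (c - x) ξ hξ
  rw [hzero, norm_zero (E := StrongDual 𝕜 (StrongDual 𝕜 E))] at hnorm
  have hcx : ‖c - x‖ = 0 := by linarith [norm_nonneg (c - x), norm_nonneg ξ]
  exact (sub_eq_zero.mp (norm_eq_zero.mp hcx)).symm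

lemma inclusionInDoubleDual_mem_weakStarClosure {E : Type*} [NormedAddCommGroup E]
    [NormedSpace ℝ E] {C : Set E} {x : E}
    (hx : toWeakSpace ℝ E x ∈ closure (toWeakSpace ℝ E '' C)) :
    inclusionInDoubleDual ℝ E x ∈ weakStarClosure (inclusionInDoubleDual ℝ E '' C) := by
  have himage : inclusionInDoubleDualWeak ℝ E '' (toWeakSpace ℝ E '' C) =
      StrongDual.toWeakDual '' (inclusionInDoubleDual ℝ E '' C) := by
    rw [image_image, image_image]
    rfl
  rw [weakStarClosure, mem_ofPred_eq, ← himage]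
  exact image_closure_subset_closure_image (inclusionInDoubleDualWeak ℝ E).continuous
    ⟨_, hx, rfl⟩

theorem isLEmbeddedSet_weaklyClosed_general {E : Type*} [NormedAddCommGroup E] [NormedSpace ℝ E]
    (C : Set E) (hL : IsLEmbeddedSet C) :
    IsClosed (toWeakSpace ℝ E '' C) := by
  obtain ⟨Es, hEs, hdecomp⟩ := hL
  refine closure_subset_iff_isClosed.mp fun y hy => ?_
  set x := (toWeakSpace ℝ E).symm y
  obtain ⟨c, hc, ξ, hξ, hx, -⟩ :=
    hdecomp _ (inclusionInDoubleDual_mem_weakStarClosure (x := x) (by simpa [x] using hy))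
  refine ⟨c, hc, ?_⟩
  rw [← eq_of_inclusionInDoubleDual_eq_add hEs hξ hx]
  simp [x]

/-- Every L-embedded subset of a Banach space is weakly closed. -/
theorem isLEmbeddedSet_weaklyClosed {E : Type*} [NormedAddCommGroup E] [NormedSpace ℝ E]
    [CompleteSpace E] (C : Set E) (hC : C.Nonempty) (hL : IsLEmbeddedSet C) :
    IsClosed (toWeakSpace ℝ E '' C) :=
  isLEmbeddedSet_weaklyClosed_general C hL
end

section
/- A Banach space E is L-embedded if and only if its closed unit ball is an L-embedded subset of E. -/
open NormedSpace Set

/-- A Banach space `E` is L-embedded if `E** = E ⊕₁ E_s` for some subspace `E_s`. -/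
def IsLEmbeddedSpace (E : Type*) [NormedAddCommGroup E] [NormedSpace ℝ E] : Prop :=
  ∃ Es : Submodule ℝ (StrongDual ℝ (StrongDual ℝ E)),
    (∀ (x : E), ∀ ξ ∈ Es, ‖inclusionInDoubleDual ℝ E x + ξ‖ = ‖x‖ + ‖ξ‖) ∧
    ∀ u : StrongDual ℝ (StrongDual ℝ E), ∃ x : E, ∃ ξ ∈ Es, u = inclusionInDoubleDual ℝ E x + ξ

/-!
By Goldstine's theorem, together with the weak-* lower semicontinuity of the norm, the weak-*
closure of the unit ball of `E` in `E**` is the unit ball of `E**`. Hence, for a fixed `E_s`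
with `E + E_s = E ⊕₁ E_s`, the ball condition asks that every `u` with `‖u‖ ≤ 1` splits as
`x + ξ` with `ξ ∈ E_s`; additivity of the norm then puts `x` in the unit ball automatically.
Conversely, such splittings of the unit ball make `E + E_s` a subspace with nonempty interior,
hence all of `E**`.
-/

open Metric

theorem Submodule.eq_top_of_forall_norm_le_mem {F : Type*} [NormedAddCommGroup F]
    [NormedSpace ℝ F] (s : Submodule ℝ F) {r : ℝ} (hr : 0 < r)
    (hs : ∀ x : F, ‖x‖ ≤ r → x ∈ s) : s = ⊤ := by
  refine s.eq_top_of_nonempty_interior' ⟨0, interior_mono ?_ (mem_interior_iff_mem_nhds.2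
    (closedBall_mem_nhds 0 hr))⟩
  exact fun x hx => hs x (mem_closedBall_zero_iff.1 hx)

theorem ContinuousLinearMap.opNorm_le_of_forall_closedBall_lt {F : Type*} [NormedAddCommGroup F]
    [NormedSpace ℝ F] (φ : StrongDual ℝ F) {r : ℝ} (h : ∀ x ∈ closedBall (0 : F) 1, φ x < r) :
    ‖φ‖ ≤ r := by
  have hr : 0 ≤ r := by simpa using (h 0 (mem_closedBall_self zero_le_one)).le
  refine φ.opNorm_le_of_unit_norm hr fun x hx => abs_le.2 ⟨?_, (h x (by simp [hx])).le⟩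
  have := h (-x) (by simp [hx])
  rw [map_neg] at this
  linarith

section Goldstine

variable {E : Type*} [NormedAddCommGroup E] [NormedSpace ℝ E]

theorem norm_le_one_of_mem_weakStarClosure_image_closedBall {u : StrongDual ℝ (StrongDual ℝ E)}
    (hu : u ∈ weakStarClosure (inclusionInDoubleDual ℝ E '' closedBall 0 1)) : ‖u‖ ≤ 1 := by
  refine mem_closedBall_zero_iff.1 (closure_minimal ?_ (WeakDual.isClosed_closedBall 0 1) hu)
  rintro _ ⟨_, ⟨x, hx, rfl⟩, rfl⟩
  exact mem_closedBall_zero_iff.2 ((double_dual_bound ℝ E x).trans (mem_closedBall_zero_iff.1 hx))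

/-- Goldstine's theorem. -/
theorem mem_weakStarClosure_image_closedBall_of_norm_le_one {u : StrongDual ℝ (StrongDual ℝ E)}
    (hu : ‖u‖ ≤ 1) : u ∈ weakStarClosure (inclusionInDoubleDual ℝ E '' closedBall 0 1) := by
  by_contra hnot
  have hK : Convex ℝ
      (closure (StrongDual.toWeakDual '' (inclusionInDoubleDual ℝ E '' closedBall (0 : E) 1))) := by
    rw [image_image]
    exact ((convex_closedBall (0 : E) 1).linear_image
      (StrongDual.toWeakDual.toLinearMap ∘ₗ (inclusionInDoubleDual ℝ E).toLinearMap)).closure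
  have : LocallyConvexSpace ℝ (WeakDual ℝ (StrongDual ℝ E)) :=
    (WeakDual.withSeminorms ℝ (StrongDual ℝ E)).toLocallyConvexSpace
  obtain ⟨f, r, hfK, hfu⟩ := geometric_hahn_banach_closed_point hK isClosed_closure hnot
  obtain ⟨φ, rfl⟩ := LinearMap.dualEmbedding_surjective (topDualPairing ℝ _) f
  have hφ : ‖φ‖ ≤ r := φ.opNorm_le_of_forall_closedBall_lt fun x hx =>
    hfK _ (subset_closure ⟨_, ⟨x, hx, rfl⟩, rfl⟩)
  have : u φ ≤ r :=
    calc u φ ≤ ‖u‖ * ‖φ‖ := (le_abs_self _).trans (u.le_opNorm φ)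
      _ ≤ 1 * r := mul_le_mul hu hφ (norm_nonneg _) zero_le_one
      _ = r := one_mul r
  exact this.not_gt hfu

theorem weakStarClosure_image_closedBall :
    weakStarClosure (inclusionInDoubleDual ℝ E '' closedBall 0 1) = {u | ‖u‖ ≤ 1} :=
  Set.ext fun _ => ⟨norm_le_one_of_mem_weakStarClosure_image_closedBall,
    mem_weakStarClosure_image_closedBall_of_norm_le_one⟩

end Goldstine

theorem isLEmbeddedSpace_iff_unitBall_general {E : Type*} [NormedAddCommGroup E] [NormedSpace ℝ E] :
    IsLEmbeddedSpace E ↔ IsLEmbeddedSet (Metric.closedBall (0 : E) 1) := by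
  unfold IsLEmbeddedSpace IsLEmbeddedSet
  simp only [weakStarClosure_image_closedBall, mem_ofPred_eq]
  refine exists_congr fun Es => and_congr_right fun hEs => ⟨fun hdec u hu => ?_, fun hdec u => ?_⟩
  · obtain ⟨x, ξ, hξ, rfl⟩ := hdec u
    have hx : ‖x‖ ≤ 1 := by linarith [hEs x ξ hξ, norm_nonneg ξ]
    exact ⟨x, mem_closedBall_zero_iff.2 hx, ξ, hξ, rfl, hEs x ξ hξ⟩
  · have htop : LinearMap.range (inclusionInDoubleDual ℝ E : E →ₗ[ℝ] _) ⊔ Es = ⊤ := by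
      refine Submodule.eq_top_of_forall_norm_le_mem (F := StrongDual ℝ (StrongDual ℝ E)) _
        one_pos fun v hv => ?_
      obtain ⟨c, -, ξ, hξ, rfl, -⟩ := hdec v hv
      exact Submodule.add_mem_sup (LinearMap.mem_range_self _ c) hξ
    obtain ⟨_, ⟨x, rfl⟩, ξ, hξ, hu⟩ := Submodule.mem_sup.1 (htop ▸ Submodule.mem_top (x := u))
    exact ⟨x, ξ, hξ, hu.symm⟩

/-- A Banach space is L-embedded iff its closed unit ball is an L-embedded subset. -/
theorem isLEmbeddedSpace_iff_unitBall {E : Type*} [NormedAddCommGroup E] [NormedSpace ℝ E]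
    [CompleteSpace E] :
    IsLEmbeddedSpace E ↔ IsLEmbeddedSet (Metric.closedBall (0 : E) 1) :=
  isLEmbeddedSpace_iff_unitBall_general
end

section
/- Every weak* closed subset of the dual space X* of an M-embedded Banach space X is L-embedded. -/
open NormedSpace Set

/-- A Banach space `X` is M-embedded if `X*** = X* ⊕₁ X^⊥`, where
`X^⊥` is the annihilator of `X` in `X***`. -/
def IsMEmbeddedSpace (X : Type*) [NormedAddCommGroup X] [NormedSpace ℝ X] : Prop :=
  ∀ ψ : StrongDual ℝ (StrongDual ℝ (StrongDual ℝ X)),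
    ∃ f : StrongDual ℝ X, ∃ φ : StrongDual ℝ (StrongDual ℝ (StrongDual ℝ X)),
      (∀ x : X, φ (inclusionInDoubleDual ℝ X x) = 0) ∧
      ψ = inclusionInDoubleDual ℝ (StrongDual ℝ X) f + φ ∧ @Norm.norm _ (ContinuousLinearMap.hasOpNorm (σ₁₂ := RingHom.id ℝ)
          (E := StrongDual ℝ (StrongDual ℝ X)) (F := ℝ)) ψ = ‖f‖ +
        @Norm.norm _ (ContinuousLinearMap.hasOpNorm (σ₁₂ := RingHom.id ℝ)
          (E := StrongDual ℝ (StrongDual ℝ X)) (F := ℝ)) φ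

/-!
The complement in `X***` is the annihilator `X^⊥`, i.e. the kernel of the restriction map
`ψ ↦ ψ ∘ ι_X : X*** → X*`. M-embeddedness makes `‖ι f + ξ‖ = ‖f‖ + ‖ξ‖` for `ξ ∈ X^⊥`: decompose
`ι f + ξ` as in the definition and restrict both decompositions to `X`. Every `u ∈ X***` splits as
`ι (u ∘ ι_X) + (u - ι (u ∘ ι_X))`, and since restriction is weak*-continuous `X*** → X*` and fixes
`ι c`, it maps the weak* closure of `ι '' C` into the weak* closure of `C`, which is `C`.
-/

/-- Instance search does not find the normed group structure of `X***` on its own. -/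
noncomputable abbrev tripleDualNormedAddCommGroup (X : Type*) [NormedAddCommGroup X]
    [NormedSpace ℝ X] : NormedAddCommGroup (StrongDual ℝ (StrongDual ℝ (StrongDual ℝ X))) :=
  @ContinuousLinearMap.toNormedAddCommGroup ℝ ℝ (StrongDual ℝ (StrongDual ℝ X)) ℝ _ _ _ _ _ _
    (RingHom.id ℝ) _

attribute [local instance] tripleDualNormedAddCommGroup

section

variable {X : Type*} [NormedAddCommGroup X] [NormedSpace ℝ X]

variable (X) in
noncomputable def restrictDual :
    StrongDual ℝ (StrongDual ℝ (StrongDual ℝ X)) →ₗ[ℝ] StrongDual ℝ X where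
  toFun ψ := ψ.comp (inclusionInDoubleDual ℝ X)
  map_add' _ _ := rfl
  map_smul' _ _ := rfl

@[simp]
theorem restrictDual_inclusionInDoubleDual (f : StrongDual ℝ X) :
    restrictDual X (inclusionInDoubleDual ℝ (StrongDual ℝ X) f) = f :=
  rfl

theorem sub_inclusionInDoubleDual_restrictDual_mem_ker
    (ψ : StrongDual ℝ (StrongDual ℝ (StrongDual ℝ X))) :
    ψ - inclusionInDoubleDual ℝ (StrongDual ℝ X) (restrictDual X ψ) ∈
      LinearMap.ker (restrictDual X) := by
  simp

theorem IsMEmbeddedSpace.norm_inclusionInDoubleDual_add (hM : IsMEmbeddedSpace X)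
    (f : StrongDual ℝ X) {ξ : StrongDual ℝ (StrongDual ℝ (StrongDual ℝ X))}
    (hξ : ξ ∈ LinearMap.ker (restrictDual X)) :
    ‖inclusionInDoubleDual ℝ (StrongDual ℝ X) f + ξ‖ = ‖f‖ + ‖ξ‖ := by
  obtain ⟨g, φ, hφX, hsum, hnorm⟩ := hM (inclusionInDoubleDual ℝ (StrongDual ℝ X) f + ξ)
  have hφ : φ ∈ LinearMap.ker (restrictDual X) := ContinuousLinearMap.ext hφX
  have hfg : f = g := by
    simpa [LinearMap.mem_ker.mp hξ, LinearMap.mem_ker.mp hφ] using congrArg (restrictDual X) hsum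
  subst hfg
  rw [hnorm, add_left_cancel hsum]

theorem IsMEmbeddedSpace.norm_eq_norm_restrictDual_add_norm_sub (hM : IsMEmbeddedSpace X)
    (ψ : StrongDual ℝ (StrongDual ℝ (StrongDual ℝ X))) :
    ‖ψ‖ = ‖restrictDual X ψ‖ +
      ‖ψ - inclusionInDoubleDual ℝ (StrongDual ℝ X) (restrictDual X ψ)‖ := by
  have h := hM.norm_inclusionInDoubleDual_add (restrictDual X ψ)
    (sub_inclusionInDoubleDual_restrictDual_mem_ker ψ)
  rwa [add_sub_cancel] at h

theorem continuous_weakDual_restrictDual :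
    Continuous fun v : WeakDual ℝ (StrongDual ℝ (StrongDual ℝ X)) =>
      StrongDual.toWeakDual (restrictDual X (StrongDual.toWeakDual.symm v)) :=
  WeakDual.continuous_of_continuous_eval fun x =>
    WeakDual.eval_continuous (inclusionInDoubleDual ℝ X x)

theorem restrictDual_mem_of_mem_weakStarClosure {C : Set (StrongDual ℝ X)}
    (hC : IsClosed (StrongDual.toWeakDual '' C : Set (WeakDual ℝ X)))
    {ψ : StrongDual ℝ (StrongDual ℝ (StrongDual ℝ X))}
    (hψ : ψ ∈ weakStarClosure (inclusionInDoubleDual ℝ (StrongDual ℝ X) '' C)) :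
    restrictDual X ψ ∈ C := by
  have himage := image_closure_subset_closure_image continuous_weakDual_restrictDual ⟨_, hψ, rfl⟩
  rw [← image_comp, ← image_comp] at himage
  simp only [Function.comp_def, LinearEquiv.symm_apply_apply,
    restrictDual_inclusionInDoubleDual] at himage
  rw [hC.closure_eq] at himage
  obtain ⟨c, hc, hcψ⟩ := himage
  exact StrongDual.toWeakDual.injective hcψ ▸ hc

end

theorem isLEmbeddedSet_of_weakStarClosed_general {X : Type*} [NormedAddCommGroup X] [NormedSpace ℝ X]
    (hM : IsMEmbeddedSpace X) (C : Set (StrongDual ℝ X))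
    (hclosed : IsClosed (StrongDual.toWeakDual '' C : Set (WeakDual ℝ X))) :
    IsLEmbeddedSet C :=
  ⟨LinearMap.ker (restrictDual X), fun f _ hξ => hM.norm_inclusionInDoubleDual_add f hξ,
    fun ψ hψ => ⟨restrictDual X ψ, restrictDual_mem_of_mem_weakStarClosure hclosed hψ, _,
      sub_inclusionInDoubleDual_restrictDual_mem_ker ψ, (add_sub_cancel _ ψ).symm,
      hM.norm_eq_norm_restrictDual_add_norm_sub ψ⟩⟩

/-- Every weak* closed subset of the dual of an M-embedded Banach space is L-embedded. -/
theorem isLEmbeddedSet_of_weakStarClosed {X : Type*} [NormedAddCommGroup X] [NormedSpace ℝ X]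
    [CompleteSpace X] (hM : IsMEmbeddedSpace X) (C : Set (StrongDual ℝ X)) (hC : C.Nonempty)
    (hclosed : IsClosed (StrongDual.toWeakDual '' C : Set (WeakDual ℝ X))) :
    IsLEmbeddedSet C :=
  isLEmbeddedSet_of_weakStarClosed_general hM C hclosed
end

section
/- Let C be a nonempty L-embedded subset of a Banach space E and B a nonempty bounded subset of E. Then the Chebyshev center W_C(B) of B in C is nonempty and weakly compact; if C is convex, then W_C(B) is convex. -/
open NormedSpace Set

/-- The Chebyshev radius of `B` in `C`. -/
noncomputable def chebyshevRadius {E : Type*} [NormedAddCommGroup E] (C B : Set E) : ℝ :=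
  sInf {r : ℝ | 0 ≤ r ∧ ∃ x ∈ C, ∀ b ∈ B, ‖x - b‖ ≤ r}

/-- The Chebyshev center of `B` in `C`. -/
noncomputable def chebyshevCenter {E : Type*} [NormedAddCommGroup E] (C B : Set E) : Set E :=
  {x ∈ C | ∀ b ∈ B, ‖x - b‖ ≤ chebyshevRadius C B}

/-! Send `E` weak-to-weak-star into its bidual. By Banach–Alaoglu, the points of the weak-star
closure of `C` lying within `r = r_C(B)` of every point of `B` form a nonempty weak-star compact
set. L-embeddedness writes such a point as `c + ξ` with `‖c - b‖ + ‖ξ‖ ≤ r` for all `b ∈ B`, so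
minimality of `r` forces `ξ = 0` and `c ∈ W_C(B)`: this compact set is exactly the image of
`W_C(B)`. Convexity is clear, as `W_C(B)` is `C` cut by closed balls. -/

open Filter Metric

namespace Chebyshev

variable {E : Type*} [NormedAddCommGroup E]

lemma chebyshevRadius_le {C B : Set E} {x : E} {s : ℝ} (hx : x ∈ C) (hs : 0 ≤ s)
    (h : ∀ b ∈ B, ‖x - b‖ ≤ s) : chebyshevRadius C B ≤ s :=
  csInf_le ⟨0, fun _ hr => hr.1⟩ ⟨hs, x, hx, h⟩

lemma exists_forall_norm_sub_le_chebyshevRadius_add {C B : Set E} (hC : C.Nonempty)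
    (hB : Bornology.IsBounded B) {ε : ℝ} (hε : 0 < ε) :
    ∃ x ∈ C, ∀ b ∈ B, ‖x - b‖ ≤ chebyshevRadius C B + ε := by
  obtain ⟨x, hx⟩ := hC
  obtain ⟨R, hR⟩ := hB.subset_closedBall x
  have hne : {r : ℝ | 0 ≤ r ∧ ∃ x ∈ C, ∀ b ∈ B, ‖x - b‖ ≤ r}.Nonempty :=
    ⟨max R 0, le_max_right _ _, x, hx, fun b hb => by
      rw [norm_sub_rev, ← dist_eq_norm]; exact (hR hb).trans (le_max_left _ _)⟩
  obtain ⟨s, ⟨-, y, hy, hys⟩, hs⟩ := exists_lt_of_csInf_lt hne (lt_add_of_pos_right _ hε)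
  exact ⟨y, hy, fun b hb => (hys b hb).trans hs.le⟩

lemma chebyshevCenter_eq_inter_iInter_closedBall (C B : Set E) :
    chebyshevCenter C B = C ∩ ⋂ b ∈ B, closedBall b (chebyshevRadius C B) := by
  ext x
  simp [chebyshevCenter, dist_eq_norm]

lemma _root_.Convex.chebyshevCenter [NormedSpace ℝ E] {C : Set E} (hC : Convex ℝ C) (B : Set E) :
    Convex ℝ (chebyshevCenter C B) := by
  rw [chebyshevCenter_eq_inter_iInter_closedBall]
  exact hC.inter (convex_iInter₂ fun b _ => convex_closedBall b _)

variable [NormedSpace ℝ E]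

noncomputable def toWeakBidual (x : E) : WeakDual ℝ (StrongDual ℝ E) :=
  inclusionInDoubleDualWeak ℝ E (toWeakSpace ℝ E x)

noncomputable def bidualBallInter (B : Set E) (s : ℝ) : Set (WeakDual ℝ (StrongDual ℝ E)) :=
  ⋂ b ∈ B, WeakDual.toStrongDual ⁻¹' closedBall (inclusionInDoubleDual ℝ E b) s

lemma isClosed_bidualBallInter (B : Set E) (s : ℝ) : IsClosed (bidualBallInter B s) :=
  isClosed_biInter fun _ _ => WeakDual.isClosed_closedBall _ _

lemma isCompact_bidualBallInter {B : Set E} (hB : B.Nonempty) (s : ℝ) :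
    IsCompact (bidualBallInter B s) :=
  (WeakDual.isCompact_closedBall _ s).of_isClosed_subset (isClosed_bidualBallInter B s)
    (biInter_subset_of_mem hB.some_mem)

lemma bidualBallInter_mono (B : Set E) {s t : ℝ} (hst : s ≤ t) :
    bidualBallInter B s ⊆ bidualBallInter B t :=
  biInter_mono subset_rfl fun _ _ => preimage_mono (closedBall_subset_closedBall hst)

lemma mem_bidualBallInter_of_forall_add_one_div {B : Set E} {s : ℝ}
    {u : WeakDual ℝ (StrongDual ℝ E)} (h : ∀ n : ℕ, u ∈ bidualBallInter B (s + 1 / (n + 1))) :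
    u ∈ bidualBallInter B s := by
  simp only [bidualBallInter, mem_iInter₂, mem_preimage, mem_closedBall] at h ⊢
  intro b hb
  simpa using ge_of_tendsto' (tendsto_const_nhds.add tendsto_one_div_add_atTop_nhds_zero_nat)
    fun n => h n b hb

lemma toWeakBidual_mem_bidualBallInter {B : Set E} {s : ℝ} {x : E} :
    toWeakBidual x ∈ bidualBallInter B s ↔ ∀ b ∈ B, ‖x - b‖ ≤ s := by
  simp only [bidualBallInter, mem_iInter₂, mem_preimage, mem_closedBall, ← dist_eq_norm]
  exact forall₂_congr fun b _ => by
    rw [← (inclusionInDoubleDualLi ℝ (E := E)).isometry.dist_eq x b]; rfl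

lemma image_toWeakBidual_chebyshevCenter_subset (C B : Set E) :
    toWeakBidual '' chebyshevCenter C B ⊆
      closure (toWeakBidual '' C) ∩ bidualBallInter B (chebyshevRadius C B) := by
  rintro _ ⟨x, hx, rfl⟩
  exact ⟨subset_closure (mem_image_of_mem _ hx.1), toWeakBidual_mem_bidualBallInter.2 hx.2⟩

lemma nonempty_closure_inter_bidualBallInter_chebyshevRadius {C B : Set E} (hC : C.Nonempty)
    (hB : B.Nonempty) (hBbd : Bornology.IsBounded B) :
    (closure (toWeakBidual '' C) ∩ bidualBallInter B (chebyshevRadius C B)).Nonempty := by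
  set T : ℕ → Set (WeakDual ℝ (StrongDual ℝ E)) := fun n =>
    closure (toWeakBidual '' C) ∩ bidualBallInter B (chebyshevRadius C B + 1 / (n + 1))
  have hT_nonempty (n : ℕ) : (T n).Nonempty := by
    obtain ⟨x, hx, hxB⟩ :=
      exists_forall_norm_sub_le_chebyshevRadius_add hC hBbd (Nat.one_div_pos_of_nat (n := n))
    exact ⟨_, subset_closure (mem_image_of_mem _ hx), toWeakBidual_mem_bidualBallInter.2 hxB⟩
  have hT_anti (n : ℕ) : T (n + 1) ⊆ T n :=
    inter_subset_inter_right _ (bidualBallInter_mono B (by gcongr; linarith))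
  obtain ⟨u, hu⟩ := IsCompact.nonempty_iInter_of_sequence_nonempty_isCompact_isClosed T hT_anti
    hT_nonempty ((isCompact_bidualBallInter hB _).inter_left isClosed_closure)
    fun n => isClosed_closure.inter (isClosed_bidualBallInter B _)
  exact ⟨u, (mem_iInter.1 hu 0).1, mem_bidualBallInter_of_forall_add_one_div fun n =>
    (mem_iInter.1 hu n).2⟩

lemma _root_.IsLEmbeddedSet.image_toWeakBidual_chebyshevCenter {C B : Set E}
    (hL : IsLEmbeddedSet C) (hB : B.Nonempty) :
    toWeakBidual '' chebyshevCenter C B =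
      closure (toWeakBidual '' C) ∩ bidualBallInter B (chebyshevRadius C B) := by
  refine (image_toWeakBidual_chebyshevCenter_subset C B).antisymm ?_
  rintro u ⟨huC, huB⟩
  obtain ⟨Es, hadd, hdecomp⟩ := hL
  have hu : WeakDual.toStrongDual u ∈ weakStarClosure (inclusionInDoubleDual ℝ E '' C) := by
    rwa [weakStarClosure, mem_ofPred_eq, image_image]
  obtain ⟨c, hc, ξ, hξ, hu_eq, -⟩ := hdecomp _ hu
  have hcξ : ∀ b ∈ B, ‖c - b‖ + ‖ξ‖ ≤ chebyshevRadius C B := by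
    intro b hb
    have hub : ‖WeakDual.toStrongDual u - inclusionInDoubleDual ℝ E b‖ ≤ chebyshevRadius C B :=
      dist_eq_norm (E := StrongDual ℝ (StrongDual ℝ E)) _ _ ▸ mem_iInter₂.1 huB b hb
    have hsplit : WeakDual.toStrongDual u - inclusionInDoubleDual ℝ E b =
        inclusionInDoubleDual ℝ E (c - b) + ξ := by
      rw [hu_eq, map_sub]; abel
    rwa [hsplit, hadd _ _ hξ] at hub
  obtain ⟨b₀, hb₀⟩ := hB
  have hξ0 : ξ = 0 := by
    have : chebyshevRadius C B ≤ chebyshevRadius C B - ‖ξ‖ :=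
      chebyshevRadius_le hc (by linarith [hcξ b₀ hb₀, norm_nonneg (c - b₀)])
        fun b hb => by linarith [hcξ b hb]
    exact (norm_le_zero_iff (a := ξ)).1 (by linarith)
  refine ⟨c, ⟨hc, fun b hb => by linarith [hcξ b hb, norm_nonneg ξ]⟩, ?_⟩
  rw [hξ0, add_zero] at hu_eq
  exact congrArg StrongDual.toWeakDual hu_eq.symm

end Chebyshev

open Chebyshev in
theorem chebyshevCenter_nonempty_weaklyCompact_general {E : Type*} [NormedAddCommGroup E]
    [NormedSpace ℝ E] (C B : Set E) (hCne : C.Nonempty)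
    (hL : IsLEmbeddedSet C) (hBne : B.Nonempty) (hBbd : Bornology.IsBounded B) :
    (chebyshevCenter C B).Nonempty ∧
      IsCompact (toWeakSpace ℝ E '' chebyshevCenter C B) ∧
      (Convex ℝ C → Convex ℝ (chebyshevCenter C B)) := by
  have hW := hL.image_toWeakBidual_chebyshevCenter hBne
  refine ⟨?_, ?_, fun hC => hC.chebyshevCenter B⟩
  · rw [← image_nonempty (f := toWeakBidual), hW]
    exact nonempty_closure_inter_bidualBallInter_chebyshevRadius hCne hBne hBbd
  · rw [(isEmbedding_inclusionInDoubleDualWeak ℝ E).isCompact_iff, image_image]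
    change IsCompact (toWeakBidual '' chebyshevCenter C B)
    rw [hW]
    exact (isCompact_bidualBallInter hBne _).inter_left isClosed_closure

/-- For a nonempty L-embedded set `C` and a nonempty bounded set `B`, the Chebyshev center
`W_C(B)` is nonempty and weakly compact; it is convex when `C` is convex. -/
theorem chebyshevCenter_nonempty_weaklyCompact {E : Type*} [NormedAddCommGroup E]
    [NormedSpace ℝ E] [CompleteSpace E] (C B : Set E) (hCne : C.Nonempty)
    (hL : IsLEmbeddedSet C) (hBne : B.Nonempty) (hBbd : Bornology.IsBounded B) :
    (chebyshevCenter C B).Nonempty ∧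
      IsCompact (toWeakSpace ℝ E '' chebyshevCenter C B) ∧
      (Convex ℝ C → Convex ℝ (chebyshevCenter C B)) :=
  chebyshevCenter_nonempty_weaklyCompact_general C B hCne hL hBne hBbd
end

section
/- Let S be a semigroup acting on a subset C of a Banach space by nonexpansive maps T_s, and let B ⊆ C be a nonempty bounded set with B ⊆ T_s(B) for all s ∈ S. Then the Chebyshev center W_C(B) of B in C is invariant under every T_s. -/
open Set

theorem mapsTo_chebyshevCenter {E : Type*} [NormedAddCommGroup E] {C B : Set E} {f : E → E}
    (hf : MapsTo f C C) (hf_nonexp : ∀ x ∈ C, ∀ y ∈ C, ‖f x - f y‖ ≤ ‖x - y‖)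
    (hBC : B ⊆ C) (hBf : B ⊆ f '' B) :
    MapsTo f (chebyshevCenter C B) (chebyshevCenter C B) := by
  rintro x ⟨hxC, hxB⟩
  refine ⟨hf hxC, fun b hb => ?_⟩
  obtain ⟨b', hb', rfl⟩ := hBf hb
  calc ‖f x - f b'‖ ≤ ‖x - b'‖ := hf_nonexp x hxC b' (hBC hb')
    _ ≤ chebyshevRadius C B := hxB b' hb'

theorem chebyshevCenter_invariant_general {E S : Type*} [NormedAddCommGroup E]
    (C B : Set E) (T : S → E → E)
    (hmaps : ∀ s, MapsTo (T s) C C)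
    (hnonexp : ∀ s : S, ∀ x ∈ C, ∀ y ∈ C, ‖T s x - T s y‖ ≤ ‖x - y‖)
    (hBC : B ⊆ C)
    (hBsub : ∀ s : S, B ⊆ T s '' B) :
    ∀ s : S, MapsTo (T s) (chebyshevCenter C B) (chebyshevCenter C B) :=
  fun s => mapsTo_chebyshevCenter (hmaps s) (hnonexp s) hBC (hBsub s)

/-- If a semigroup `S` acts on `C ⊆ E` by nonexpansive maps and `B ⊆ C` is a nonempty
bounded set with `B ⊆ T_s(B)` for all `s`, then the Chebyshev center `W_C(B)` is invariant
under every `T_s`. -/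
theorem chebyshevCenter_invariant {E S : Type*} [NormedAddCommGroup E] [Semigroup S]
    (C B : Set E) (T : S → E → E)
    (hmaps : ∀ s, MapsTo (T s) C C)
    (hrep : ∀ s t : S, ∀ x ∈ C, T (s * t) x = T s (T t x))
    (hnonexp : ∀ s : S, ∀ x ∈ C, ∀ y ∈ C, ‖T s x - T s y‖ ≤ ‖x - y‖)
    (hBC : B ⊆ C) (hBne : B.Nonempty) (hBbd : Bornology.IsBounded B)
    (hBsub : ∀ s : S, B ⊆ T s '' B) :
    ∀ s : S, MapsTo (T s) (chebyshevCenter C B) (chebyshevCenter C B) :=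
  chebyshevCenter_invariant_general C B T hmaps hnonexp hBC hBsub
end

section
/- Every left reversible discrete semigroup S can be exhausted by countable left reversible subsemigroups: for every finite subset α of S there exists a countable left reversible subsemigroup S_α of S containing α. -/
/-!
Choose, for every pair `s, t`, witnesses `u s t` and `v s t` with `s * u s t = t * v s t`.
Closing the finite set `α` under the three binary operations `*`, `u` and `v` in countably many
rounds keeps it countable, and the result is a subsemigroup containing the witnesses for all its
pairs.
-/

open Set

namespace BinaryOpClosure

variable {X ι : Type*} (ops : ι → X → X → X)

def step (A : Set X) : Set X :=
  A ∪ ⋃ i, image2 (ops i) A A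

def closure (A : Set X) : Set X :=
  ⋃ n, (step ops)^[n] A

variable {ops}

theorem subset_step (A : Set X) : A ⊆ step ops A :=
  subset_union_left

theorem image2_subset_step (i : ι) (A : Set X) : image2 (ops i) A A ⊆ step ops A :=
  (subset_iUnion (fun i => image2 (ops i) A A) i).trans subset_union_right

theorem countable_step [Countable ι] {A : Set X} (hA : A.Countable) :
    (step ops A).Countable :=
  hA.union (countable_iUnion fun i => hA.image2 hA (ops i))

theorem monotone_iterate_step (A : Set X) : Monotone fun n => (step ops)^[n] A :=
  monotone_nat_of_le_succ fun n => by
    rw [Function.iterate_succ_apply']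
    exact subset_step _

theorem subset_closure (A : Set X) : A ⊆ closure ops A :=
  subset_iUnion (fun n => (step ops)^[n] A) 0

theorem countable_closure [Countable ι] {A : Set X} (hA : A.Countable) :
    (closure ops A).Countable :=
  countable_iUnion fun n => by
    induction n with
    | zero => exact hA
    | succ n ih =>
      rw [Function.iterate_succ_apply']
      exact countable_step ih

theorem apply_mem_closure {A : Set X} (i : ι) {a b : X} (ha : a ∈ closure ops A)
    (hb : b ∈ closure ops A) : ops i a b ∈ closure ops A := by
  obtain ⟨n, ha⟩ := mem_iUnion.1 ha
  obtain ⟨m, hb⟩ := mem_iUnion.1 hb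
  have hmono := monotone_iterate_step (ops := ops) A
  refine mem_iUnion.2 ⟨max n m + 1, ?_⟩
  rw [Function.iterate_succ_apply']
  exact image2_subset_step i _
    (mem_image2_of_mem (hmono (le_max_left n m) ha) (hmono (le_max_right n m) hb))

end BinaryOpClosure

open BinaryOpClosure in
/-- Every left reversible discrete semigroup is exhausted by countable left reversible
subsemigroups: every finite subset is contained in a countable left reversible
subsemigroup. -/
theorem exists_countable_leftReversible_subsemigroup {S : Type*} [Semigroup S]
    (hrev : ∀ s t : S, ∃ u v : S, s * u = t * v) (α : Finset S) :
    ∃ T : Set S, T.Countable ∧ (∀ a ∈ T, ∀ b ∈ T, a * b ∈ T) ∧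
      (∀ a ∈ T, ∀ b ∈ T, ∃ u ∈ T, ∃ v ∈ T, a * u = b * v) ∧ (α : Set S) ⊆ T := by
  choose u v huv using hrev
  let ops : Fin 3 → S → S → S := ![(· * ·), u, v]
  refine ⟨closure ops α, countable_closure α.countable_toSet,
    fun a ha b hb => apply_mem_closure (ops := ops) 0 ha hb,
    fun a ha b hb => ⟨u a b, apply_mem_closure (ops := ops) 1 ha hb,
      v a b, apply_mem_closure (ops := ops) 2 ha hb, huv a b⟩,
    subset_closure _⟩
end

section
/- In a discrete semigroup S, define a ~ b if there exists x ∈ S with ax = bx. If S is left reversible, then ~ is an equivalence relation on S which is compatible with multiplication (a ~ b and c ~ d imply ac ~ bd), so the quotient S/~ is a right cancellative semigroup. -/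
/-!
Transitivity and compatibility on the left factor both come from the same move: two witnesses
`x`, `y` of `a ~ b` and `b ~ c` (or `x` and the factor `d`) have a common right multiple
`x * u = y * v` by left reversibility, and a witness stays a witness when multiplied on the right.
-/

section

variable {S : Type*} [Semigroup S]

theorem exists_mul_eq_mul_trans (hrev : ∀ s t : S, ∃ u v : S, s * u = t * v) {a b c : S}
    (hab : ∃ x, a * x = b * x) (hbc : ∃ x, b * x = c * x) : ∃ x, a * x = c * x := by
  obtain ⟨x, hx⟩ := hab
  obtain ⟨y, hy⟩ := hbc
  obtain ⟨u, v, huv⟩ := hrev x y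
  refine ⟨x * u, ?_⟩
  rw [← mul_assoc, hx, mul_assoc, huv, ← mul_assoc, hy, mul_assoc, ← huv]

theorem exists_mul_eq_mul_equivalence (hrev : ∀ s t : S, ∃ u v : S, s * u = t * v) :
    Equivalence (fun a b : S => ∃ x : S, a * x = b * x) :=
  ⟨fun a => ⟨a, rfl⟩, fun ⟨x, hx⟩ => ⟨x, hx.symm⟩, exists_mul_eq_mul_trans hrev⟩

theorem exists_mul_eq_mul_mul_right (hrev : ∀ s t : S, ∃ u v : S, s * u = t * v) {a b : S}
    (d : S) (hab : ∃ x, a * x = b * x) : ∃ x, a * d * x = b * d * x := by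
  obtain ⟨x, hx⟩ := hab
  obtain ⟨u, v, huv⟩ := hrev x d
  refine ⟨v, ?_⟩
  rw [mul_assoc, ← huv, ← mul_assoc, hx, mul_assoc, huv, mul_assoc]

theorem exists_mul_eq_mul_mul_left (a : S) {c d : S} (hcd : ∃ x, c * x = d * x) :
    ∃ x, a * c * x = a * d * x := by
  obtain ⟨x, hx⟩ := hcd
  exact ⟨x, by rw [mul_assoc, hx, mul_assoc]⟩

theorem exists_mul_eq_mul_of_mul_right {a b c : S} (h : ∃ x, a * c * x = b * c * x) :
    ∃ x, a * x = b * x := by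
  obtain ⟨x, hx⟩ := h
  exact ⟨c * x, by rw [← mul_assoc, hx, mul_assoc]⟩

end

/-- In a left reversible discrete semigroup, the relation `a ~ b ↔ ∃ x, a*x = b*x` is a
multiplicative congruence whose quotient is right cancellative. -/
theorem leftReversible_congruence {S : Type*} [Semigroup S]
    (hrev : ∀ s t : S, ∃ u v : S, s * u = t * v) :
    Equivalence (fun a b : S => ∃ x : S, a * x = b * x) ∧
      (∀ a b c d : S, (∃ x, a * x = b * x) → (∃ x, c * x = d * x) →
        ∃ x, (a * c) * x = (b * d) * x) ∧
      (∀ a b c : S, (∃ x, (a * c) * x = (b * c) * x) → ∃ x, a * x = b * x) :=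
  ⟨exists_mul_eq_mul_equivalence hrev,
    fun a _ _ d hab hcd => exists_mul_eq_mul_trans hrev (exists_mul_eq_mul_mul_left a hcd)
      (exists_mul_eq_mul_mul_right hrev d hab),
    fun _ _ _ => exists_mul_eq_mul_of_mul_right⟩
end
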